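/- Let (Ω, ℙ) be a probability space, let Y⋆ : Ω → ℝ be an integrable random variable, let Z : Ω → ℝ^{d_Z} and X : Ω → ℝ^{d_X} be random vectors, let φ : ℝ^{d_Z} → ℝ be measurable with φ∘Z integrable, and let f̂ : ℝ^{d_X} → ℝ be measurable with f̂∘X integrable. Suppose r > 0 satisfies 𝔼[|Y⋆ − φ(Z)|] ≤ r and 𝔼[φ(Z)] > r. Then 𝔼[|Y⋆ − f̂(X)|] / 𝔼[Y⋆] ≤ (r + 𝔼[|φ(Z) − f̂(X)|]) / (𝔼[φ(Z)] − r). -/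
import Mathlib


open MeasureTheory

theorem relative_total_error_bound
    {Ω : Type*} [MeasurableSpace Ω] (μ : Measure Ω) [IsProbabilityMeasure μ]
    {dZ dX : ℕ}
    (Ystar : Ω → ℝ) (Z : Ω → (Fin dZ → ℝ)) (X : Ω → (Fin dX → ℝ))
    (φ : (Fin dZ → ℝ) → ℝ) (fhat : (Fin dX → ℝ) → ℝ)
    (hYstar : Integrable Ystar μ)
    (hφ : Measurable φ) (hφZ : Integrable (fun ω => φ (Z ω)) μ)
    (hfhat : Measurable fhat) (hfX : Integrable (fun ω => fhat (X ω)) μ)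
    (r : ℝ) (hr : 0 < r)
    (happrox : ∫ ω, |Ystar ω - φ (Z ω)| ∂μ ≤ r)
    (hmean : r < ∫ ω, φ (Z ω) ∂μ) :
    (∫ ω, |Ystar ω - fhat (X ω)| ∂μ) / (∫ ω, Ystar ω ∂μ)
      ≤ (r + ∫ ω, |φ (Z ω) - fhat (X ω)| ∂μ) / ((∫ ω, φ (Z ω) ∂μ) - r) := by
  have h1 : Integrable (fun ω => |Ystar ω - φ (Z ω)|) μ := (hYstar.sub hφZ).abs
  have h2 : Integrable (fun ω => |φ (Z ω) - fhat (X ω)|) μ := (hφZ.sub hfX).abs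
  have h3 : Integrable (fun ω => |Ystar ω - fhat (X ω)|) μ := (hYstar.sub hfX).abs
  -- numerator bound
  have hnum : (∫ ω, |Ystar ω - fhat (X ω)| ∂μ)
      ≤ r + ∫ ω, |φ (Z ω) - fhat (X ω)| ∂μ := by
    have := integral_mono h3 (h1.add h2) (fun ω => by
      have := abs_sub (Ystar ω - φ (Z ω)) (fhat (X ω) - φ (Z ω))
      simpa [abs_sub_comm, sub_sub_sub_cancel_right] using
        abs_sub_le (Ystar ω) (φ (Z ω)) (fhat (X ω)))
    simp only [Pi.add_apply] at this; rw [integral_add h1 h2] at this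
    linarith
  -- denominator bound: E[φZ] - r ≤ E[Y⋆]
  have hden : (∫ ω, φ (Z ω) ∂μ) - r ≤ ∫ ω, Ystar ω ∂μ := by
    have hdiff : (∫ ω, φ (Z ω) ∂μ) - ∫ ω, Ystar ω ∂μ ≤ r := by
      have h4 : (∫ ω, φ (Z ω) - Ystar ω ∂μ) ≤ ∫ ω, |Ystar ω - φ (Z ω)| ∂μ := by
        refine integral_mono (hφZ.sub hYstar) h1 (fun ω => ?_)
        rw [abs_sub_comm]
        exact le_abs_self _
      rw [integral_sub hφZ hYstar] at h4
      linarith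
    linarith
  have hpos : 0 < (∫ ω, φ (Z ω) ∂μ) - r := by linarith
  exact div_le_div₀ (by positivity) hnum hpos hden
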